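/- Let (τ, T, ≤) be a weak stability condition on the abelian category 𝒜 with respect to cl, and suppose 𝒜 is noetherian and τ-artinian. Then every nonzero object X of 𝒜 has a unique nonzero τ-semistable subobject S₁ ⊆ X such that: τ(cl S₁) ≥ τ(cl A) for every nonzero τ-semistable subobject A ⊆ X, and every nonzero τ-semistable subobject A ⊆ X with τ(cl A) = τ(cl S₁) satisfies A ⊆ S₁ (as subobjects of X). -/

import Mathlib

/-!
Call `D < C` destabilizing when `D ≠ 0` and `τ(C/D) ≤ τ(D)`; τ-artinianity makes
this relation well-founded. Well-founded induction then shows that every nonzero `C` contains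
a semistable `S` with `τ(C) ≤ τ(S)`, and, descending into a maximal destabilizing subobject
(noetherianity), a semistable subobject whose τ-value `t` is the largest among those of all
semistable subobjects of `C`.

Take `C = X`. By the seesaw inequality along `D ≤ D ⊔ U ≤ U ⊔ V` and the second isomorphism
theorem, the subobjects all of whose proper quotients have τ-value `≥ t` are closed under `⊔`, so
noetherianity gives a largest one, `S₁`. It contains every semistable subobject of τ-value `t`,
and it is itself semistable of τ-value `t` because every nonzero subobject of `X` has
τ-value `≤ t`.
-/

open CategoryTheory CategoryTheory.Limits

namespace JoyceIII

universe u v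

variable {𝒜 : Type u} [Category.{v} 𝒜] [Abelian 𝒜]
variable {K : Type*} [AddCommGroup K] {T : Type*} [LinearOrder T]

/-- `α ∈ C(𝒜)`: `α` is the class of some nonzero object of `𝒜`. -/
def InC (cl : 𝒜 → K) (α : K) : Prop := ∃ X : 𝒜, ¬ IsZero X ∧ cl X = α

/-- `cl` is additive on short exact sequences: `cl Y = cl X + cl Z` for every
short exact sequence `0 → X → Y → Z → 0`. -/
def ClAdditive (cl : 𝒜 → K) : Prop :=
  ∀ S : ShortComplex 𝒜, S.ShortExact → cl S.X₂ = cl S.X₁ + cl S.X₃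

/-- `cl X = 0` implies `X ≅ 0`. -/
def ClNondeg (cl : 𝒜 → K) : Prop := ∀ X : 𝒜, cl X = 0 → IsZero X

/-- `(τ, T, ≤)` is a weak stability condition: the weak seesaw inequality holds. -/
def IsWeakStability (cl : 𝒜 → K) (τ : K → T) : Prop :=
  ∀ α β γ : K, InC cl α → InC cl β → InC cl γ → β = α + γ →
    (τ α ≤ τ β ∧ τ β ≤ τ γ) ∨ (τ γ ≤ τ β ∧ τ β ≤ τ α)

/-- `(τ, T, ≤)` is a stability condition: the seesaw inequality holds. -/
def IsStability (cl : 𝒜 → K) (τ : K → T) : Prop :=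
  ∀ α β γ : K, InC cl α → InC cl β → InC cl γ → β = α + γ →
    (τ α < τ β ∧ τ β < τ γ) ∨ (τ γ < τ β ∧ τ β < τ α) ∨ (τ α = τ β ∧ τ β = τ γ)

/-- The quotient object `X/S` of `X` by a subobject `S`, i.e. the cokernel of
the inclusion `S → X`. -/
noncomputable def quotBySub {X : 𝒜} (S : Subobject X) : 𝒜 := cokernel S.arrow

/-- The quotient `B / A` of subobjects `A ≤ B` of `X` (implemented as the
cokernel of the inclusion `A ⊓ B → B`, which agrees with `B / A` when `A ≤ B`). -/
noncomputable def subQuot {X : 𝒜} (A B : Subobject X) : 𝒜 :=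
  cokernel (Subobject.ofLE (A ⊓ B) B inf_le_right)

/-- `X` is `τ`-semistable: `X` is nonzero and every subobject `S ⊆ X` with
`S ≇ 0`, `S ≠ X` satisfies `τ(cl S) ≤ τ(cl (X/S))`. -/
def Semistable (cl : 𝒜 → K) (τ : K → T) (X : 𝒜) : Prop :=
  ¬ IsZero X ∧ ∀ S : Subobject X, ¬ IsZero ((S : 𝒜)) → S ≠ ⊤ →
    τ (cl ((S : 𝒜))) ≤ τ (cl (quotBySub S))

/-- `X` is `τ`-stable: `X` is nonzero and every subobject `S ⊆ X` with
`S ≇ 0`, `S ≠ X` satisfies `τ(cl S) < τ(cl (X/S))`. -/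
def Stable (cl : 𝒜 → K) (τ : K → T) (X : 𝒜) : Prop :=
  ¬ IsZero X ∧ ∀ S : Subobject X, ¬ IsZero ((S : 𝒜)) → S ≠ ⊤ →
    τ (cl ((S : 𝒜))) < τ (cl (quotBySub S))

/-- `𝒜` is noetherian: all ascending chains of subobjects stabilize. -/
def CatNoetherian (ℬ : Type u) [Category.{v} ℬ] [Abelian ℬ] : Prop :=
  ∀ (X : ℬ) (A : ℕ → Subobject X), (∀ n, A n ≤ A (n + 1)) →
    ∃ N, ∀ n, N ≤ n → A n = A N

/-- `𝒜` is `τ`-artinian: there is no infinite chain of subobjects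
`⋯ ⊆ A₂ ⊆ A₁ ⊆ X` with `A (n+1) ≠ A n` and `τ(cl A (n+1)) ≥ τ(cl (A n / A (n+1)))`. -/
def TauArtinian (cl : 𝒜 → K) (τ : K → T) : Prop :=
  ¬ ∃ (X : 𝒜) (A : ℕ → Subobject X),
      (∀ n, A (n + 1) ≤ A n) ∧ (∀ n, A (n + 1) ≠ A n) ∧
      ∀ n, τ (cl (subQuot (A (n + 1)) (A n))) ≤ τ (cl ((A (n + 1) : 𝒜)))

section Order

variable {α : Type*} [SemilatticeSup α] [WellFoundedGT α]

lemma SupClosed.exists_isGreatest {s : Set α} (hs : SupClosed s) (hne : s.Nonempty) :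
    ∃ a, IsGreatest s a := by
  obtain ⟨a, has, hmax⟩ := exists_maximal_of_wellFoundedGT (· ∈ s) hne
  exact ⟨a, has, fun b hbs => le_sup_right.trans (hmax (hs has hbs) le_sup_left)⟩

end Order

lemma CatNoetherian.isNoetherianObject (h : CatNoetherian 𝒜) (X : 𝒜) : IsNoetherianObject X :=
  (isNoetherianObject_iff_monotone_chain_condition X).2 fun f => by
    obtain ⟨N, hN⟩ := h X f fun n => f.monotone n.le_succ
    exact ⟨N, fun m hm => (hN m hm).symm⟩

section Subquotients

variable {Xo : 𝒜}

lemma Subobject.not_isZero_of_le {A B : Subobject Xo} (h : A ≤ B) (hA : ¬ IsZero (A : 𝒜)) :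
    ¬ IsZero (B : 𝒜) :=
  fun hB => hA (hB.of_mono (Subobject.ofLE A B h))

lemma subQuot_eq_cokernel {A B : Subobject Xo} (h : A ≤ B) :
    subQuot A B = cokernel (Subobject.ofLE A B h) := by
  unfold subQuot
  congr 2 <;> first | exact inf_eq_left.mpr h | exact proof_irrel_heq _ _

lemma not_isZero_subQuot {A B : Subobject Xo} (h : A < B) : ¬ IsZero (subQuot A B) := by
  rw [subQuot_eq_cokernel h.le, ← Preadditive.epi_iff_isZero_cokernel]
  intro
  have := isIso_of_mono_of_epi (Subobject.ofLE A B h.le)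
  exact h.not_ge (Subobject.le_of_comm (inv (Subobject.ofLE A B h.le)) (by simp))

variable (P W : Subobject Xo)

lemma epi_biprod_desc_ofLE_sup :
    Epi (biprod.desc (Subobject.ofLE P (P ⊔ W) le_sup_left)
      (-Subobject.ofLE W (P ⊔ W) le_sup_right)) := by
  set g := biprod.desc (Subobject.ofLE P (P ⊔ W) le_sup_left)
      (-Subobject.ofLE W (P ⊔ W) le_sup_right)
  set c := cokernel.π g
  have hP : Subobject.ofLE P (P ⊔ W) le_sup_left ≫ c = 0 := by
    simpa only [g, biprod.inl_desc_assoc, comp_zero] using biprod.inl ≫= cokernel.condition g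
  have hW : Subobject.ofLE W (P ⊔ W) le_sup_right ≫ c = 0 := by
    simpa only [g, biprod.inr_desc_assoc, Preadditive.neg_comp, neg_eq_zero, comp_zero] using
      biprod.inr ≫= cokernel.condition g
  have hle : P ⊔ W ≤ Subobject.mk (kernel.ι c ≫ (P ⊔ W).arrow) :=
    sup_le (Subobject.le_mk_of_comm (kernel.lift c _ hP) (by simp))
      (Subobject.le_mk_of_comm (kernel.lift c _ hW) (by simp))
  have hsection : Subobject.ofLEMk _ _ hle ≫ kernel.ι c = 𝟙 _ := by
    simp [← cancel_mono (P ⊔ W).arrow]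
  refine Abelian.epi_of_cokernel_π_eq_zero _ ?_
  change c = 0
  rw [← Category.id_comp c, ← hsection, Category.assoc, kernel.condition, comp_zero]

@[simps]
noncomputable def infSupShortComplex : ShortComplex 𝒜 where
  f := biprod.lift (Subobject.ofLE (P ⊓ W) P inf_le_left) (Subobject.ofLE (P ⊓ W) W inf_le_right)
  g := biprod.desc (Subobject.ofLE P (P ⊔ W) le_sup_left) (-Subobject.ofLE W (P ⊔ W) le_sup_right)
  zero := by simp

lemma infSupShortComplex_shortExact : (infSupShortComplex P W).ShortExact := by
  have hpb := Subobject.inf_isPullback P W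
  exact .mk' ((infSupShortComplex P W).exact_of_f_is_kernel
      (isKernelOfComp (P ⊔ W).arrow _ hpb.isLimitKernelFork _ (by ext <;> simp)))
    hpb.mono_shortComplex'_f (epi_biprod_desc_ofLE_sup P W)

end Subquotients

section Classes

variable {cl : 𝒜 → K}

lemma ClAdditive.cl_eq_add_cokernel (hadd : ClAdditive cl) {A B : 𝒜} (f : A ⟶ B) [Mono f] :
    cl B = cl A + cl (cokernel f) :=
  hadd _ (ShortComplex.ShortExact.mk' (ShortComplex.exact_of_g_is_cokernel
    (ShortComplex.mk f (cokernel.π f) (cokernel.condition f)) (cokernelIsCokernel f))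
    (by dsimp; infer_instance) (by dsimp; infer_instance))

lemma ClAdditive.cl_eq_zero (hadd : ClAdditive cl) {Y : 𝒜} (hY : IsZero Y) : cl Y = 0 := by
  have hS : (ShortComplex.mk (𝟙 Y) (𝟙 Y) (hY.eq_of_src _ _)).ShortExact :=
    .mk' (ShortComplex.exact_of_isZero_X₂ _ hY) (by dsimp; infer_instance)
      (by dsimp; infer_instance)
  simpa using hadd _ hS

lemma ClAdditive.cl_congr (hadd : ClAdditive cl) {A B : 𝒜} (e : A ≅ B) : cl A = cl B := by
  rw [hadd.cl_eq_add_cokernel e.hom, hadd.cl_eq_zero (isZero_cokernel_of_epi e.hom), add_zero]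

variable {Xo : 𝒜}

lemma ClAdditive.cl_eq_add_subQuot (hadd : ClAdditive cl) {A B : Subobject Xo} (h : A ≤ B) :
    cl (B : 𝒜) = cl (A : 𝒜) + cl (subQuot A B) := by
  rw [subQuot_eq_cokernel h]
  exact hadd.cl_eq_add_cokernel _

lemma ClAdditive.cl_subQuot_of_isZero (hadd : ClAdditive cl) {A B : Subobject Xo} (h : A ≤ B)
    (hA : IsZero (A : 𝒜)) : cl (subQuot A B) = cl (B : 𝒜) := by
  rw [hadd.cl_eq_add_subQuot h, hadd.cl_eq_zero hA, zero_add]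

lemma ClAdditive.cl_subQuot_trans (hadd : ClAdditive cl) {D E C : Subobject Xo} (hDE : D ≤ E)
    (hEC : E ≤ C) : cl (subQuot D C) = cl (subQuot D E) + cl (subQuot E C) := by
  have hDC := hadd.cl_eq_add_subQuot (hDE.trans hEC)
  rw [hadd.cl_eq_add_subQuot hEC, hadd.cl_eq_add_subQuot hDE, add_assoc] at hDC
  exact (add_left_cancel hDC).symm

lemma ClAdditive.cl_sup_add_cl_inf (hadd : ClAdditive cl) (P W : Subobject Xo) :
    cl ((P ⊔ W : Subobject Xo) : 𝒜) + cl ((P ⊓ W : Subobject Xo) : 𝒜) =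
      cl (P : 𝒜) + cl (W : 𝒜) := by
  have hmv := hadd _ (infSupShortComplex_shortExact P W)
  have hsplit := hadd _ (ShortComplex.Splitting.ofHasBinaryBiproduct (P : 𝒜) (W : 𝒜)).shortExact
  rw [← hsplit, add_comm]
  exact hmv.symm

lemma ClAdditive.cl_subQuot_sup (hadd : ClAdditive cl) (P W : Subobject Xo) :
    cl (subQuot P (P ⊔ W)) = cl (subQuot (P ⊓ W) W) := by
  have hmv := hadd.cl_sup_add_cl_inf P W
  rw [hadd.cl_eq_add_subQuot (le_sup_left : P ≤ P ⊔ W),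
    hadd.cl_eq_add_subQuot (inf_le_right : P ⊓ W ≤ W)] at hmv
  grind

end Classes

section Seesaw

lemma IsWeakStability.min_le_tau {𝒞 : Type*} [Category 𝒞] {cl : 𝒞 → K} {τ : K → T}
    (hwsc : IsWeakStability cl τ) {a b c : 𝒞} (ha : ¬ IsZero a)
    (hb : ¬ IsZero b) (hc : ¬ IsZero c) (h : cl b = cl a + cl c) :
    min (τ (cl a)) (τ (cl c)) ≤ τ (cl b) := by
  rcases hwsc _ _ _ ⟨a, ha, rfl⟩ ⟨b, hb, rfl⟩ ⟨c, hc, rfl⟩ h with h' | h'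
  · exact min_le_of_left_le h'.1
  · exact min_le_of_right_le h'.1

lemma IsWeakStability.tau_le_max {𝒞 : Type*} [Category 𝒞] {cl : 𝒞 → K} {τ : K → T}
    (hwsc : IsWeakStability cl τ) {a b c : 𝒞} (ha : ¬ IsZero a)
    (hb : ¬ IsZero b) (hc : ¬ IsZero c) (h : cl b = cl a + cl c) :
    τ (cl b) ≤ max (τ (cl a)) (τ (cl c)) := by
  rcases hwsc _ _ _ ⟨a, ha, rfl⟩ ⟨b, hb, rfl⟩ ⟨c, hc, rfl⟩ h with h' | h'
  · exact le_max_of_le_right h'.2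
  · exact le_max_of_le_left h'.2

variable {cl : 𝒜 → K} {τ : K → T} {Xo : 𝒜} {D E C : Subobject Xo}

lemma min_le_tau_of_lt (hadd : ClAdditive cl) (hwsc : IsWeakStability cl τ) (hDE : D < E)
    (hD : ¬ IsZero (D : 𝒜)) : min (τ (cl (D : 𝒜))) (τ (cl (subQuot D E))) ≤ τ (cl (E : 𝒜)) :=
  hwsc.min_le_tau hD (Subobject.not_isZero_of_le hDE.le hD) (not_isZero_subQuot hDE)
    (hadd.cl_eq_add_subQuot hDE.le)

lemma tau_le_max_of_lt (hadd : ClAdditive cl) (hwsc : IsWeakStability cl τ) (hDE : D < E)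
    (hD : ¬ IsZero (D : 𝒜)) : τ (cl (E : 𝒜)) ≤ max (τ (cl (D : 𝒜))) (τ (cl (subQuot D E))) :=
  hwsc.tau_le_max hD (Subobject.not_isZero_of_le hDE.le hD) (not_isZero_subQuot hDE)
    (hadd.cl_eq_add_subQuot hDE.le)

lemma min_le_tau_subQuot_of_lt_of_lt (hadd : ClAdditive cl) (hwsc : IsWeakStability cl τ)
    (hDE : D < E) (hEC : E < C) :
    min (τ (cl (subQuot D E))) (τ (cl (subQuot E C))) ≤ τ (cl (subQuot D C)) :=
  hwsc.min_le_tau (not_isZero_subQuot hDE) (not_isZero_subQuot (hDE.trans hEC))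
    (not_isZero_subQuot hEC) (hadd.cl_subQuot_trans hDE.le hEC.le)

end Seesaw

section Semistable

variable {cl : 𝒜 → K} {τ : K → T} {Xo : 𝒜}

lemma ClAdditive.cl_subQuot_mk_comp_arrow (hadd : ClAdditive cl) {S : Subobject Xo}
    (Z : Subobject (S : 𝒜)) :
    cl (subQuot (Subobject.mk (Z.arrow ≫ S.arrow)) S) = cl (quotBySub Z) := by
  have hle : Subobject.mk (Z.arrow ≫ S.arrow) ≤ S := (Subobject.subobjectOrderIso S Z).2
  have hfac : Subobject.ofLE _ S hle = (Subobject.underlyingIso _).hom ≫ Z.arrow := by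
    simp [← cancel_mono S.arrow]
  rw [subQuot_eq_cokernel hle, quotBySub]
  exact hadd.cl_congr (cokernelIsoOfEq hfac ≪≫ cokernelEpiComp _ _)

lemma semistable_iff (hadd : ClAdditive cl) (S : Subobject Xo) :
    Semistable cl τ (S : 𝒜) ↔ ¬ IsZero (S : 𝒜) ∧
      ∀ D < S, ¬ IsZero (D : 𝒜) → τ (cl (D : 𝒜)) ≤ τ (cl (subQuot D S)) := by
  let e := Subobject.subobjectOrderIso S
  let lattice (D : Set.Iic S) : Prop := (D : Subobject Xo) ≠ S →
    ¬ IsZero ((D : Subobject Xo) : 𝒜) → τ (cl (D : 𝒜)) ≤ τ (cl (subQuot (D : Subobject Xo) S))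
  have key (Z : Subobject (S : 𝒜)) :
      (¬ IsZero (Z : 𝒜) → Z ≠ ⊤ → τ (cl (Z : 𝒜)) ≤ τ (cl (quotBySub Z))) ↔ lattice (e Z) := by
    have hiso : ((e Z : Subobject Xo) : 𝒜) ≅ (Z : 𝒜) := Subobject.underlyingIso _
    have htop : (e Z : Subobject Xo) = S ↔ Z = ⊤ := by
      rw [← map_eq_top_iff e, Subtype.ext_iff, Set.Iic.coe_top]
    have hquot : cl (subQuot (e Z : Subobject Xo) S) = cl (quotBySub Z) :=
      hadd.cl_subQuot_mk_comp_arrow Z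
    simp only [lattice, ne_eq, htop, hiso.isZero_iff, hadd.cl_congr hiso, hquot]
    exact forall_comm
  refine and_congr_right fun _ => (forall_congr' key).trans ?_
  refine (e.toEquiv.forall_congr_right (q := lattice)).trans ?_
  simp only [lattice, Subtype.forall, Set.mem_Iic, lt_iff_le_and_ne, and_imp]

variable {D S : Subobject Xo}

lemma Semistable.tau_le_of_le (hadd : ClAdditive cl) (hwsc : IsWeakStability cl τ)
    (hS : Semistable cl τ (S : 𝒜)) (hDS : D ≤ S) (hD : ¬ IsZero (D : 𝒜)) :
    τ (cl (D : 𝒜)) ≤ τ (cl (S : 𝒜)) := by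
  obtain rfl | hlt := hDS.eq_or_lt
  · rfl
  · have h := ((semistable_iff hadd S).1 hS).2 D hlt hD
    simpa only [min_eq_left h] using min_le_tau_of_lt hadd hwsc hlt hD

lemma Semistable.tau_le_subQuot (hadd : ClAdditive cl) (hwsc : IsWeakStability cl τ)
    (hS : Semistable cl τ (S : 𝒜)) (hDS : D < S) :
    τ (cl (S : 𝒜)) ≤ τ (cl (subQuot D S)) := by
  by_cases hD : IsZero (D : 𝒜)
  · rw [hadd.cl_subQuot_of_isZero hDS.le hD]
  · have h := ((semistable_iff hadd S).1 hS).2 D hDS hD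
    simpa only [max_eq_right h] using tau_le_max_of_lt hadd hwsc hDS hD

end Semistable

section Destabilizing

def Destabilizes {L : Type*} (cl : 𝒜 → L) (τ : L → T) {Xo : 𝒜} (D C : Subobject Xo) : Prop :=
  D < C ∧ ¬ IsZero (D : 𝒜) ∧ τ (cl (subQuot D C)) ≤ τ (cl (D : 𝒜))

lemma TauArtinian.wellFounded_destabilizes {L : Type*} {cl : 𝒜 → L} {τ : L → T} {Xo : 𝒜}
    (hart : TauArtinian cl τ) : WellFounded (Destabilizes cl τ (Xo := Xo)) := by
  refine ⟨fun C => by_contra fun hC => ?_⟩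
  obtain ⟨A, -, hA⟩ := not_acc_iff_exists_descending_chain.1 hC
  exact hart ⟨Xo, A, fun n => (hA n).1.le, fun n => (hA n).1.ne, fun n => (hA n).2.2⟩

variable {cl : 𝒜 → K} {τ : K → T} {Xo : 𝒜}

lemma exists_destabilizes_of_not_semistable (hadd : ClAdditive cl) {C : Subobject Xo}
    (hC : ¬ IsZero (C : 𝒜)) (h : ¬ Semistable cl τ (C : 𝒜)) : ∃ D, Destabilizes cl τ D C := by
  simp only [semistable_iff hadd, hC, not_false_eq_true, true_and, not_forall, not_le] at h
  obtain ⟨D, hDC, hD, hlt⟩ := h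
  exact ⟨D, hDC, hD, hlt.le⟩

lemma Destabilizes.tau_le (hadd : ClAdditive cl) (hwsc : IsWeakStability cl τ)
    {D C : Subobject Xo} (h : Destabilizes cl τ D C) : τ (cl (C : 𝒜)) ≤ τ (cl (D : 𝒜)) :=
  (tau_le_max_of_lt hadd hwsc h.1 h.2.1).trans (max_eq_left h.2.2).le

lemma exists_semistable_le_tau_le (hadd : ClAdditive cl) (hwsc : IsWeakStability cl τ)
    (hart : TauArtinian cl τ) (C : Subobject Xo) (hC : ¬ IsZero (C : 𝒜)) :
    ∃ S ≤ C, Semistable cl τ (S : 𝒜) ∧ τ (cl (C : 𝒜)) ≤ τ (cl (S : 𝒜)) := by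
  induction C using hart.wellFounded_destabilizes.induction with
  | _ C ih => ?_
  by_cases hss : Semistable cl τ (C : 𝒜)
  · exact ⟨C, le_rfl, hss, le_rfl⟩
  obtain ⟨D, hD⟩ := exists_destabilizes_of_not_semistable hadd hC hss
  obtain ⟨S, hSD, hS, hτ⟩ := ih D hD hD.2.1
  exact ⟨S, hSD.trans hD.1.le, hS, (hD.tau_le hadd hwsc).trans hτ⟩

lemma tau_le_of_forall_semistable_le (hadd : ClAdditive cl) (hwsc : IsWeakStability cl τ)
    (hart : TauArtinian cl τ) {C D : Subobject Xo} {t : T}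
    (ht : ∀ S ≤ C, Semistable cl τ (S : 𝒜) → τ (cl (S : 𝒜)) ≤ t) (hDC : D ≤ C)
    (hD : ¬ IsZero (D : 𝒜)) : τ (cl (D : 𝒜)) ≤ t := by
  obtain ⟨S, hSD, hS, hτ⟩ := exists_semistable_le_tau_le hadd hwsc hart D hD
  exact hτ.trans (ht S (hSD.trans hDC) hS)

lemma tau_subQuot_le_of_maximal (hadd : ClAdditive cl) (hwsc : IsWeakStability cl τ)
    {Dm E C : Subobject Xo} (hmax : Maximal (Destabilizes cl τ · C) Dm) (hDE : Dm < E)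
    (hEC : E ≤ C) : τ (cl (subQuot Dm E)) ≤ τ (cl (Dm : 𝒜)) := by
  obtain ⟨⟨-, hDm, hτDm⟩, hDm_max⟩ := hmax
  obtain rfl | hEC := hEC.eq_or_lt
  · exact hτDm
  have hE : ¬ IsZero (E : 𝒜) := Subobject.not_isZero_of_le hDE.le hDm
  have hτE : τ (cl (E : 𝒜)) < τ (cl (subQuot E C)) := by
    by_contra! h
    exact hDE.not_ge (hDm_max ⟨hEC, hE, h⟩ hDE.le)
  -- otherwise `τ(C/E) ≤ τ(C/Dm) ≤ τ(Dm) ≤ τ(E) < τ(C/E)`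
  by_contra! hlt
  have hDmE : τ (cl (Dm : 𝒜)) ≤ τ (cl (E : 𝒜)) := by
    simpa only [min_eq_left hlt.le] using min_le_tau_of_lt hadd hwsc hDE hDm
  have hCE : τ (cl (subQuot E C)) ≤ τ (cl (subQuot Dm C)) := by
    rcases min_le_iff.1 (min_le_tau_subQuot_of_lt_of_lt hadd hwsc hDE hEC) with h | h
    · exact absurd (h.trans hτDm) hlt.not_ge
    · exact h
  exact (hCE.trans (hτDm.trans hDmE)).not_gt hτE

theorem exists_semistable_le_forall_tau_le [IsNoetherianObject Xo] (hadd : ClAdditive cl)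
    (hwsc : IsWeakStability cl τ) (hart : TauArtinian cl τ) (C : Subobject Xo)
    (hC : ¬ IsZero (C : 𝒜)) :
    ∃ S ≤ C, Semistable cl τ (S : 𝒜) ∧
      ∀ S' ≤ C, Semistable cl τ (S' : 𝒜) → τ (cl (S' : 𝒜)) ≤ τ (cl (S : 𝒜)) := by
  induction C using hart.wellFounded_destabilizes.induction with
  | _ C ih => ?_
  by_cases hss : Semistable cl τ (C : 𝒜)
  · exact ⟨C, le_rfl, hss, fun S' hS'C hS' => hss.tau_le_of_le hadd hwsc hS'C hS'.1⟩
  obtain ⟨Dm, hDm⟩ := exists_maximal_of_wellFoundedGT (Destabilizes cl τ · C)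
    (exists_destabilizes_of_not_semistable hadd hC hss)
  obtain ⟨S, hSDm, hS, hmax⟩ := ih Dm hDm.1 hDm.1.2.1
  refine ⟨S, hSDm.trans hDm.1.1.le, hS, fun S' hS'C hS' => ?_⟩
  by_cases hS'Dm : S' ≤ Dm
  · exact hmax S' hS'Dm hS'
  calc τ (cl (S' : 𝒜)) ≤ τ (cl (subQuot (Dm ⊓ S') S')) :=
        hS'.tau_le_subQuot hadd hwsc (inf_lt_right.2 hS'Dm)
    _ = τ (cl (subQuot Dm (Dm ⊔ S'))) := by rw [hadd.cl_subQuot_sup]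
    _ ≤ τ (cl (Dm : 𝒜)) :=
        tau_subQuot_le_of_maximal hadd hwsc hDm (left_lt_sup.2 hS'Dm) (sup_le hDm.1.1.le hS'C)
    _ ≤ τ (cl (S : 𝒜)) := tau_le_of_forall_semistable_le hadd hwsc hart hmax le_rfl hDm.1.2.1

end Destabilizing

section QuotientsTauGE

variable {cl : 𝒜 → K} {τ : K → T} {Xo : 𝒜} {t : T}

def QuotientsTauGE (cl : 𝒜 → K) (τ : K → T) (t : T) {Xo : 𝒜} (W : Subobject Xo) : Prop :=
  ∀ D < W, t ≤ τ (cl (subQuot D W))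

lemma QuotientsTauGE.le_tau (hadd : ClAdditive cl) {W : Subobject Xo}
    (h : QuotientsTauGE cl τ t W) (hW : ¬ IsZero (W : 𝒜)) : t ≤ τ (cl (W : 𝒜)) := by
  have hbot : IsZero ((⊥ : Subobject Xo) : 𝒜) := IsZero.of_mono_eq_zero _ Subobject.bot_arrow
  have hlt : ⊥ < W := bot_lt_iff_ne_bot.2 fun hW' => hW (hW' ▸ hbot)
  simpa only [hadd.cl_subQuot_of_isZero bot_le hbot] using h ⊥ hlt

lemma Semistable.quotientsTauGE (hadd : ClAdditive cl) (hwsc : IsWeakStability cl τ)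
    {S : Subobject Xo} (hS : Semistable cl τ (S : 𝒜)) (ht : t ≤ τ (cl (S : 𝒜))) :
    QuotientsTauGE cl τ t S :=
  fun _ hD => ht.trans (hS.tau_le_subQuot hadd hwsc hD)

lemma QuotientsTauGE.sup (hadd : ClAdditive cl) (hwsc : IsWeakStability cl τ)
    {U V : Subobject Xo} (hU : QuotientsTauGE cl τ t U) (hV : QuotientsTauGE cl τ t V) :
    QuotientsTauGE cl τ t (U ⊔ V) := by
  intro D hD
  -- `(U ⊔ V)/D` is an extension of `(U ⊔ V)/(D ⊔ U) ≅ V/((D ⊔ U) ⊓ V)` by `(D ⊔ U)/D ≅ U/(D ⊓ U)`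
  have hlow (h : D < D ⊔ U) : t ≤ τ (cl (subQuot D (D ⊔ U))) := by
    rw [hadd.cl_subQuot_sup]
    exact hU _ (inf_lt_right.2 (left_lt_sup.1 h))
  have hhigh (h : D ⊔ U < U ⊔ V) : t ≤ τ (cl (subQuot (D ⊔ U) (U ⊔ V))) := by
    have hsup : D ⊔ U ⊔ V = U ⊔ V := by rw [sup_assoc, sup_eq_right.2 hD.le]
    rw [← hsup, hadd.cl_subQuot_sup]
    exact hV _ (inf_lt_right.2 fun hVDU => h.not_ge (sup_le le_sup_right hVDU))
  obtain hDU | hDU := (le_sup_left : D ≤ D ⊔ U).eq_or_lt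
  · rw [hDU]
    exact hhigh (by rwa [← hDU])
  obtain hUV | hUV := (sup_le hD.le le_sup_left : D ⊔ U ≤ U ⊔ V).eq_or_lt
  · rw [← hUV]
    exact hlow hDU
  exact (le_min (hlow hDU) (hhigh hUV)).trans (min_le_tau_subQuot_of_lt_of_lt hadd hwsc hDU hUV)

lemma QuotientsTauGE.semistable (hadd : ClAdditive cl) (hwsc : IsWeakStability cl τ)
    (hart : TauArtinian cl τ) (hbound : ∀ S : Subobject Xo, Semistable cl τ (S : 𝒜) →
      τ (cl (S : 𝒜)) ≤ t) {W : Subobject Xo} (h : QuotientsTauGE cl τ t W)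
    (hW : ¬ IsZero (W : 𝒜)) : Semistable cl τ (W : 𝒜) ∧ τ (cl (W : 𝒜)) = t := by
  have hle (D : Subobject Xo) (hD : ¬ IsZero (D : 𝒜)) : τ (cl (D : 𝒜)) ≤ t :=
    tau_le_of_forall_semistable_le hadd hwsc hart (C := ⊤) (fun S _ => hbound S) le_top hD
  exact ⟨(semistable_iff hadd W).2 ⟨hW, fun D hD hD0 => (hle D hD0).trans (h D hD)⟩,
    (hle W hW).antisymm (h.le_tau hadd hW)⟩

end QuotientsTauGE

theorem existsUnique_maximal_semistable_subobject_general (cl : 𝒜 → K) (τ : K → T)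
    (hadd : ClAdditive cl)
    (hwsc : IsWeakStability cl τ)
    (hnoeth : CatNoetherian 𝒜) (hart : TauArtinian cl τ)
    (X : 𝒜) (hX : ¬ IsZero X) :
    ∃! S₁ : Subobject X,
      ¬ IsZero ((S₁ : 𝒜)) ∧ Semistable cl τ ((S₁ : 𝒜)) ∧
      (∀ A : Subobject X, ¬ IsZero ((A : 𝒜)) → Semistable cl τ ((A : 𝒜)) →
        τ (cl ((A : 𝒜))) ≤ τ (cl ((S₁ : 𝒜)))) ∧
      (∀ A : Subobject X, ¬ IsZero ((A : 𝒜)) → Semistable cl τ ((A : 𝒜)) →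
        τ (cl ((A : 𝒜))) = τ (cl ((S₁ : 𝒜))) → A ≤ S₁) := by
  have := hnoeth.isNoetherianObject X
  have htop : ¬ IsZero ((⊤ : Subobject X) : 𝒜) :=
    fun h => hX (h.of_iso (asIso (⊤ : Subobject X).arrow).symm)
  obtain ⟨Smax, -, hSmax, hbound⟩ := exists_semistable_le_forall_tau_le hadd hwsc hart ⊤ htop
  set t := τ (cl (Smax : 𝒜))
  have hSmaxG : QuotientsTauGE cl τ t Smax := hSmax.quotientsTauGE hadd hwsc le_rfl
  obtain ⟨U, hU, hUgreatest⟩ := SupClosed.exists_isGreatest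
    (s := {W : Subobject X | QuotientsTauGE cl τ t W}) (fun _ hA _ hB => hA.sup hadd hwsc hB)
    ⟨Smax, hSmaxG⟩
  have hU0 := Subobject.not_isZero_of_le (hUgreatest hSmaxG) hSmax.1
  obtain ⟨hUss, hUt⟩ := hU.semistable hadd hwsc hart (fun S hS => hbound S le_top hS) hU0
  have hle_U (A : Subobject X) (hA : Semistable cl τ (A : 𝒜)) (hAt : τ (cl (A : 𝒜)) = t) :
      A ≤ U :=
    hUgreatest (hA.quotientsTauGE hadd hwsc hAt.ge)
  refine ⟨U, ⟨hU0, hUss, fun A _ hA => hUt ▸ hbound A le_top hA,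
    fun A _ hA hAU => hle_U A hA (hAU.trans hUt)⟩, ?_⟩
  rintro B ⟨hB0, hBss, hBmax, hBU⟩
  have hBt : τ (cl (B : 𝒜)) = t := (hbound B le_top hBss).antisymm (hUt ▸ hBmax U hU0 hUss)
  exact (hle_U B hBss hBt).antisymm (hBU U hU0 hUss (hUt.trans hBt.symm))

/-- **Step 6 of the proof of Theorem 4.4.** If `𝒜` is noetherian and
`τ`-artinian, every nonzero `X` has a unique nonzero `τ`-semistable subobject
`S₁ ⊆ X` such that `τ(cl S₁)` is maximal among the `τ`-values of nonzero
`τ`-semistable subobjects of `X`, and every nonzero `τ`-semistable subobject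
`A ⊆ X` with `τ(cl A) = τ(cl S₁)` satisfies `A ⊆ S₁`. -/
theorem existsUnique_maximal_semistable_subobject (cl : 𝒜 → K) (τ : K → T)
    (hadd : ClAdditive cl) (hnd : ClNondeg cl)
    (hwsc : IsWeakStability cl τ)
    (hnoeth : CatNoetherian 𝒜) (hart : TauArtinian cl τ)
    (X : 𝒜) (hX : ¬ IsZero X) :
    ∃! S₁ : Subobject X,
      ¬ IsZero ((S₁ : 𝒜)) ∧ Semistable cl τ ((S₁ : 𝒜)) ∧
      (∀ A : Subobject X, ¬ IsZero ((A : 𝒜)) → Semistable cl τ ((A : 𝒜)) →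
        τ (cl ((A : 𝒜))) ≤ τ (cl ((S₁ : 𝒜)))) ∧
      (∀ A : Subobject X, ¬ IsZero ((A : 𝒜)) → Semistable cl τ ((A : 𝒜)) →
        τ (cl ((A : 𝒜))) = τ (cl ((S₁ : 𝒜))) → A ≤ S₁) :=
  existsUnique_maximal_semistable_subobject_general cl τ hadd hwsc hnoeth hart X hX

end JoyceIII
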